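/- arXiv:2305.02808 — 2 statements merged into one kernel-verified Lean document; each statement's English description precedes it below -/
import Mathlib

section
/- Fix $r \ge 1$ and $\lambda > 0$, let $m = \min\{\lambda, 1\}$, and let $\pi$ be a pair partition of $[2r]$ with sign map $\epsilon_\pi$. Define $F : [0,1] \times [-m,m]^{|SP(\pi)|} \times [-\lambda,1]^{|DP(\pi)|} \to \mathbb{R}$ by $F(x_0, x_1, \ldots, x_r) = \prod_{s=1}^{r} \chi_{[0,\lambda]}\left(x_0 + \sum_{i=1}^{2s-1} \epsilon_\pi(i) x_{\pi(i)}\right) \chi_{[0,1]}\left(x_0 + \sum_{i=1}^{2s} \epsilon_\pi(i) x_{\pi(i)}\right)$. Then $F$ is strictly positive (equal to $1$) on the subdomain $\left[\frac{m}{4}, \frac{3m}{4}\right] \times \left[-\frac{m}{8r}, \frac{m}{8r}\right]^{r}$, and consequently $M_r := \int F > 0$. -/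
open Finset MeasureTheory

/-- The integrand of `M_r` (for a pair partition of `[2r]` encoded by its block map
`blk` and sign map `ε`) equals `1` on the small box
`[m/4, 3m/4] × [-m/(8r), m/(8r)]^r`, and consequently the integral `M_r` over the
domain `[0,1] × [-m,m]^{|SP(π)|} × [-λ,1]^{|DP(π)|}` is strictly positive. -/
theorem integrand_pos_on_small_box_and_integral_pos
    (r : ℕ) (hr : 1 ≤ r) (lam : ℝ) (hlam : 0 < lam) (m : ℝ) (hm : m = min lam 1)
    (blk : Fin (2 * r) → Fin r)
    (hblk : ∀ b : Fin r, (Finset.univ.filter (fun i => blk i = b)).card = 2)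
    (ε : Fin (2 * r) → ℝ)
    (hε : ∀ i j : Fin (2 * r), i < j → blk i = blk j →
      ε i = 1 ∧ ε j = (-1 : ℝ) ^ (1 + (i : ℕ) + (j : ℕ)))
    (D : Fin (r + 1) → Set ℝ)
    (hD0 : D 0 = Set.Icc 0 1)
    (hDSP : ∀ b : Fin r,
      (∀ i j : Fin (2 * r), blk i = b → blk j = b → (i : ℕ) % 2 = (j : ℕ) % 2) →
      D b.succ = Set.Icc (-m) m)
    (hDDP : ∀ b : Fin r,
      ¬ (∀ i j : Fin (2 * r), blk i = b → blk j = b → (i : ℕ) % 2 = (j : ℕ) % 2) →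
      D b.succ = Set.Icc (-lam) 1)
    (F : (Fin (r + 1) → ℝ) → ℝ)
    (hF : ∀ x, F x = ∏ s ∈ Finset.range r,
      (if 0 ≤ x 0 + (∑ i ∈ Finset.univ.filter (fun i : Fin (2 * r) => (i : ℕ) < 2 * s + 1),
            ε i * x (blk i).succ) ∧
          x 0 + (∑ i ∈ Finset.univ.filter (fun i : Fin (2 * r) => (i : ℕ) < 2 * s + 1),
            ε i * x (blk i).succ) ≤ lam then (1 : ℝ) else 0) *
      (if 0 ≤ x 0 + (∑ i ∈ Finset.univ.filter (fun i : Fin (2 * r) => (i : ℕ) < 2 * s + 2),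
            ε i * x (blk i).succ) ∧
          x 0 + (∑ i ∈ Finset.univ.filter (fun i : Fin (2 * r) => (i : ℕ) < 2 * s + 2),
            ε i * x (blk i).succ) ≤ 1 then (1 : ℝ) else 0)) :
    (∀ x : Fin (r + 1) → ℝ, x 0 ∈ Set.Icc (m / 4) (3 * m / 4) →
      (∀ b : Fin r, x b.succ ∈ Set.Icc (-(m / (8 * r))) (m / (8 * r))) → F x = 1) ∧
    0 < ∫ x in Set.univ.pi D, F x := by
  have hm0 : 0 < m := by rw [hm]; exact lt_min hlam one_pos
  have hm1 : m ≤ 1 := by rw [hm]; exact min_le_right _ _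
  have hmlam : m ≤ lam := by rw [hm]; exact min_le_left _ _
  have hr0 : (0 : ℝ) < r := by exact_mod_cast hr
  -- |ε i| = 1
  have habs : ∀ i : Fin (2 * r), |ε i| = 1 := by
    intro i
    obtain ⟨a, b, hab, hs⟩ := Finset.card_eq_two.mp (hblk (blk i))
    have hi : i ∈ Finset.univ.filter (fun j => blk j = blk i) := by simp
    have ha : a ∈ Finset.univ.filter (fun j => blk j = blk i) := by rw [hs]; simp
    have hb : b ∈ Finset.univ.filter (fun j => blk j = blk i) := by rw [hs]; simp
    have hba : blk a = blk i := (Finset.mem_filter.mp ha).2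
    have hbb : blk b = blk i := (Finset.mem_filter.mp hb).2
    rw [hs] at hi
    rcases hab.lt_or_gt with h | h
    · obtain ⟨h1, h2⟩ := hε a b h (hba.trans hbb.symm)
      rcases Finset.mem_insert.mp hi with rfl | hi
      · rw [h1]; norm_num
      · rw [Finset.mem_singleton.mp hi, h2]
        rw [abs_pow, abs_neg, abs_one, one_pow]
    · obtain ⟨h1, h2⟩ := hε b a h (hbb.trans hba.symm)
      rcases Finset.mem_insert.mp hi with rfl | hi
      · rw [h2, abs_pow, abs_neg, abs_one, one_pow]
      · rw [Finset.mem_singleton.mp hi, h1]; norm_num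
  -- part 1
  have part1 : ∀ x : Fin (r + 1) → ℝ, x 0 ∈ Set.Icc (m / 4) (3 * m / 4) →
      (∀ b : Fin r, x b.succ ∈ Set.Icc (-(m / (8 * r))) (m / (8 * r))) → F x = 1 := by
    intro x hx0 hxb
    have hsum : ∀ k : ℕ,
        |∑ i ∈ Finset.univ.filter (fun i : Fin (2 * r) => (i : ℕ) < k),
          ε i * x (blk i).succ| ≤ m / 4 := by
      intro k
      calc |∑ i ∈ Finset.univ.filter (fun i : Fin (2 * r) => (i : ℕ) < k),
              ε i * x (blk i).succ|
          ≤ ∑ i ∈ Finset.univ.filter (fun i : Fin (2 * r) => (i : ℕ) < k),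
              |ε i * x (blk i).succ| := Finset.abs_sum_le_sum_abs _ _
        _ ≤ ∑ _i ∈ Finset.univ.filter (fun i : Fin (2 * r) => (i : ℕ) < k),
              (m / (8 * r)) := by
            apply Finset.sum_le_sum
            intro i _
            rw [abs_mul, habs i, one_mul]
            exact abs_le.mpr (hxb (blk i))
        _ = (Finset.univ.filter (fun i : Fin (2 * r) => (i : ℕ) < k)).card * (m / (8 * r)) := by
            rw [Finset.sum_const, nsmul_eq_mul]
        _ ≤ (2 * r : ℕ) * (m / (8 * r)) := by
            apply mul_le_mul_of_nonneg_right
            · calc ((Finset.univ.filter (fun i : Fin (2 * r) => (i : ℕ) < k)).card : ℝ)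
                  ≤ ((Finset.univ : Finset (Fin (2 * r))).card : ℝ) := by
                    exact_mod_cast Finset.card_filter_le _ _
                _ = ((2 * r : ℕ) : ℝ) := by simp
            · positivity
        _ ≤ m / 4 := by
            apply le_of_eq
            push_cast
            field_simp
            ring
    have key : ∀ k : ℕ, 0 ≤ x 0 + ∑ i ∈ Finset.univ.filter
          (fun i : Fin (2 * r) => (i : ℕ) < k), ε i * x (blk i).succ ∧
        x 0 + ∑ i ∈ Finset.univ.filter
          (fun i : Fin (2 * r) => (i : ℕ) < k), ε i * x (blk i).succ ≤ m := by
      intro k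
      have h := abs_le.mp (hsum k)
      constructor
      · linarith [hx0.1]
      · linarith [hx0.2]
    rw [hF]
    apply Finset.prod_eq_one
    intro s _
    rw [if_pos ⟨(key (2*s+1)).1, le_trans (key (2*s+1)).2 hmlam⟩,
        if_pos ⟨(key (2*s+2)).1, le_trans (key (2*s+2)).2 hm1⟩, one_mul]
  refine ⟨part1, ?_⟩
  have hr1 : (1:ℝ) ≤ r := by exact_mod_cast hr
  have hr8 : (1:ℝ) ≤ 8 * r := by nlinarith
  have hlen : 0 < m / (8 * r) := by positivity
  have hsub : m / (8 * r) ≤ m := by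
    rw [div_le_iff₀ (by positivity)]; nlinarith
  -- the small box
  set T : Fin (r + 1) → Set ℝ := fun i =>
    if i = 0 then Set.Icc (m / 4) (3 * m / 4)
    else Set.Icc (-(m / (8 * r))) (m / (8 * r)) with hT
  -- each D i is an Icc with finite positive-or-zero... just an Icc
  have hDIcc : ∀ i : Fin (r + 1), ∃ a c : ℝ, D i = Set.Icc a c := by
    intro i
    induction i using Fin.cases with
    | zero => exact ⟨0, 1, hD0⟩
    | succ b =>
      by_cases h : ∀ i j : Fin (2 * r), blk i = b → blk j = b → (i : ℕ) % 2 = (j : ℕ) % 2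
      · exact ⟨-m, m, hDSP b h⟩
      · exact ⟨-lam, 1, hDDP b h⟩
  have hDmeas : MeasurableSet (Set.univ.pi D) := by
    apply MeasurableSet.univ_pi
    intro i
    obtain ⟨a, c, hac⟩ := hDIcc i
    rw [hac]; exact measurableSet_Icc
  have hTmeas : MeasurableSet (Set.univ.pi T) := by
    apply MeasurableSet.univ_pi
    intro i
    by_cases h : i = 0 <;> simp [hT, h, measurableSet_Icc]
  have hTD : Set.univ.pi T ⊆ Set.univ.pi D := by
    apply Set.pi_mono
    intro i _
    induction i using Fin.cases with
    | zero =>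
      rw [hD0]
      simp only [hT, if_pos rfl]
      exact Set.Icc_subset_Icc (by positivity) (by linarith)
    | succ b =>
      have hTi : T b.succ = Set.Icc (-(m / (8 * r))) (m / (8 * r)) := by
        simp [hT, Fin.succ_ne_zero]
      rw [hTi]
      by_cases h : ∀ i j : Fin (2 * r), blk i = b → blk j = b → (i : ℕ) % 2 = (j : ℕ) % 2
      · rw [hDSP b h]
        exact Set.Icc_subset_Icc (by linarith) hsub
      · rw [hDDP b h]
        exact Set.Icc_subset_Icc (by linarith) (by linarith)
  -- measurability of F
  have hFeq : F = fun x => ∏ s ∈ Finset.range r,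
      (if 0 ≤ x 0 + (∑ i ∈ Finset.univ.filter (fun i : Fin (2 * r) => (i : ℕ) < 2 * s + 1),
            ε i * x (blk i).succ) ∧
          x 0 + (∑ i ∈ Finset.univ.filter (fun i : Fin (2 * r) => (i : ℕ) < 2 * s + 1),
            ε i * x (blk i).succ) ≤ lam then (1 : ℝ) else 0) *
      (if 0 ≤ x 0 + (∑ i ∈ Finset.univ.filter (fun i : Fin (2 * r) => (i : ℕ) < 2 * s + 2),
            ε i * x (blk i).succ) ∧
          x 0 + (∑ i ∈ Finset.univ.filter (fun i : Fin (2 * r) => (i : ℕ) < 2 * s + 2),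
            ε i * x (blk i).succ) ≤ 1 then (1 : ℝ) else 0) := funext hF
  have hLmeas : ∀ k : ℕ, Measurable (fun x : Fin (r + 1) → ℝ =>
      x 0 + ∑ i ∈ Finset.univ.filter (fun i : Fin (2 * r) => (i : ℕ) < k),
        ε i * x (blk i).succ) := by
    intro k
    apply Measurable.add (measurable_pi_apply 0)
    apply Finset.measurable_sum
    intro i _
    exact (measurable_pi_apply (blk i).succ).const_mul _
  have hiteMeas : ∀ (k : ℕ) (c : ℝ), Measurable (fun x : Fin (r + 1) → ℝ =>
      (if 0 ≤ x 0 + (∑ i ∈ Finset.univ.filter (fun i : Fin (2 * r) => (i : ℕ) < k),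
            ε i * x (blk i).succ) ∧
          x 0 + (∑ i ∈ Finset.univ.filter (fun i : Fin (2 * r) => (i : ℕ) < k),
            ε i * x (blk i).succ) ≤ c then (1 : ℝ) else 0)) := by
    intro k c
    apply Measurable.ite _ measurable_const measurable_const
    have : {x : Fin (r + 1) → ℝ | 0 ≤ x 0 + (∑ i ∈ Finset.univ.filter
          (fun i : Fin (2 * r) => (i : ℕ) < k), ε i * x (blk i).succ) ∧
        x 0 + (∑ i ∈ Finset.univ.filter (fun i : Fin (2 * r) => (i : ℕ) < k),
          ε i * x (blk i).succ) ≤ c} =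
        (fun x : Fin (r + 1) → ℝ => x 0 + ∑ i ∈ Finset.univ.filter
          (fun i : Fin (2 * r) => (i : ℕ) < k), ε i * x (blk i).succ) ⁻¹' Set.Icc 0 c := by
      ext x; simp [Set.mem_Icc]
    rw [this]
    exact hLmeas k measurableSet_Icc
  have hFmeas : Measurable F := by
    rw [hFeq]
    apply Finset.measurable_prod
    intro s _
    exact (hiteMeas (2 * s + 1) lam).mul (hiteMeas (2 * s + 2) 1)
  -- bounds on F
  have hF0 : ∀ x, 0 ≤ F x := by
    intro x
    rw [hF]
    apply Finset.prod_nonneg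
    intro s _
    apply mul_nonneg <;> positivity
  have hF1 : ∀ x, F x ≤ 1 := by
    intro x
    rw [hF]
    apply Finset.prod_le_one
    · intro s _; apply mul_nonneg <;> positivity
    · intro s _
      apply mul_le_one₀ _ (by positivity) _ <;> split <;> norm_num
  -- finite measure of the domain
  have hDfin : volume (Set.univ.pi D) ≠ ⊤ := by
    rw [volume_pi_pi]
    apply (ENNReal.prod_lt_top ?_).ne
    intro i _
    obtain ⟨a, c, hac⟩ := hDIcc i
    rw [hac, Real.volume_Icc]
    exact ENNReal.ofReal_lt_top
  have hInt : IntegrableOn F (Set.univ.pi D) := by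
    apply Measure.integrableOn_of_bounded hDfin hFmeas.aestronglyMeasurable (M := 1)
    filter_upwards with x
    rw [Real.norm_eq_abs, abs_le]
    exact ⟨by linarith [hF0 x], hF1 x⟩
  -- the small box has positive measure
  have hTvol : 0 < (volume (Set.univ.pi T)).toReal := by
    have hv : volume (Set.univ.pi T) = ∏ i : Fin (r + 1), volume (T i) := volume_pi_pi _
    apply ENNReal.toReal_pos
    · rw [hv]
      rw [Finset.prod_ne_zero_iff]
      intro i _
      by_cases h : i = 0 <;>
        simp only [hT, h, if_pos, if_neg, ite_true, ite_false] <;>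
        rw [Real.volume_Icc] <;>
        simp only [ne_eq, ENNReal.ofReal_eq_zero, not_le] <;> linarith
    · rw [hv]
      apply (ENNReal.prod_lt_top ?_).ne
      intro i _
      by_cases h : i = 0 <;>
        simp only [hT, h, ite_true, ite_false] <;>
        rw [Real.volume_Icc] <;> exact ENNReal.ofReal_lt_top
  -- conclude
  have hstep1 : ∫ x in Set.univ.pi T, F x = (volume (Set.univ.pi T)).toReal := by
    rw [setIntegral_congr_fun hTmeas (g := fun _ => (1 : ℝ)) ?_]
    · rw [setIntegral_const, smul_eq_mul, mul_one, Measure.real]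
    · intro x hx
      apply part1
      · have := hx 0 (Set.mem_univ 0)
        simpa [hT] using this
      · intro b
        have := hx b.succ (Set.mem_univ b.succ)
        simpa [hT, Fin.succ_ne_zero] using this
  have hmono : ∫ x in Set.univ.pi T, F x ≤ ∫ x in Set.univ.pi D, F x := by
    apply setIntegral_mono_set hInt
    · filter_upwards with x using hF0 x
    · exact HasSubset.Subset.eventuallyLE hTD
  linarith [hstep1 ▸ hTvol, hmono]
end

section
/- Let $\pi$ be a pair partition of $[2k]$ and let $\Pi_1(\pi)$ be the set of tuples $J = (j_1, \ldots, j_{2k})$ of nonzero integers with $-(p-1) \le j_q \le n-1$ satisfying $\epsilon_\pi(u) j_u = \epsilon_\pi(v) j_v$ for all $u \sim_\pi v$. Then every $J \in \Pi_1(\pi)$ satisfies $\sum_{q=1}^{2k} (-1)^q j_q = 0$, and moreover $|\Pi_1(\pi)| \le (n+p)^{k}$. -/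
open Finset

/-- For a pair partition of `[2k]` (encoded as a fixed-point-free involution `f`, with
sign map `ε`), every tuple in `Π₁(π)` — nonzero integers in `[-(p-1), n-1]` satisfying
`ε(u) j_u = ε(v) j_v` on blocks — has vanishing alternating sum, and
`|Π₁(π)| ≤ (n+p)^k`. -/
theorem Pi1_altSum_zero_and_card_le
    (n p k : ℕ)
    (f : Fin (2 * k) → Fin (2 * k))
    (hinv : ∀ i, f (f i) = i) (hfix : ∀ i, f i ≠ i)
    (ε : Fin (2 * k) → ℤ)
    (hε : ∀ i, ε i = if (i : ℕ) < ((f i : Fin (2 * k)) : ℕ)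
      then 1 else (-1) ^ (1 + (i : ℕ) + ((f i : Fin (2 * k)) : ℕ))) :
    (∀ J ∈ (Fintype.piFinset
        (fun _ : Fin (2 * k) => (Finset.Icc (-(p : ℤ) + 1) ((n : ℤ) - 1)).erase 0)).filter
        (fun J => ∀ i, ε i * J i = ε (f i) * J (f i)),
      ∑ q : Fin (2 * k), (-1 : ℤ) ^ ((q : ℕ) + 1) * J q = 0) ∧
    ((Fintype.piFinset
        (fun _ : Fin (2 * k) => (Finset.Icc (-(p : ℤ) + 1) ((n : ℤ) - 1)).erase 0)).filter
        (fun J => ∀ i, ε i * J i = ε (f i) * J (f i))).card ≤ (n + p) ^ k := by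
  have hne : ∀ i, ((i : Fin (2*k)) : ℕ) ≠ ((f i : Fin (2*k)) : ℕ) := by
    intro i h
    exact hfix i (Fin.ext h.symm)
  constructor
  · -- alternating sum
    intro J hJ
    rw [mem_filter] at hJ
    obtain ⟨-, hcond⟩ := hJ
    set g : Fin (2*k) → ℤ := fun q => (-1 : ℤ) ^ ((q : ℕ) + 1) * J q with hg
    have key : ∀ i, g i + g (f i) = 0 := by
      intro i
      have hc := hcond i
      rcases lt_or_gt_of_ne (hne i) with hlt | hgt
      · have e1 : ε i = 1 := by rw [hε i, if_pos hlt]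
        have e2 : ε (f i) = (-1) ^ (1 + ((f i : Fin (2*k)) : ℕ) + (i : ℕ)) := by
          rw [hε (f i), hinv i, if_neg (by omega)]
        rw [e1, e2, one_mul] at hc
        simp only [hg]
        rw [hc]
        set a := (i : ℕ); set b := ((f i : Fin (2*k)) : ℕ)
        have : (-1:ℤ)^(a+1) * (-1:ℤ)^(1+b+a) = (-1:ℤ)^b := by
          rw [← pow_add]
          have h2 : a+1+(1+b+a) = b + 2*(a+1) := by ring
          rw [h2, pow_add, pow_mul]; simp
        rw [mul_comm ((-1:ℤ)^(1+b+a)) (J (f i)), ← mul_assoc, mul_comm ((-1:ℤ)^(a+1)), mul_assoc]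
        rw [mul_comm (J (f i))]
        rw [this]
        rw [pow_succ]
        ring
      · have e1 : ε i = (-1) ^ (1 + (i:ℕ) + ((f i : Fin (2*k)) : ℕ)) := by
          rw [hε i, if_neg (by omega)]
        have e2 : ε (f i) = 1 := by
          rw [hε (f i), hinv i, if_pos (by omega)]
        rw [e1, e2, one_mul] at hc
        simp only [hg]
        rw [← hc]
        set a := (i : ℕ); set b := ((f i : Fin (2*k)) : ℕ)
        have : (-1:ℤ)^(b+1) * (-1:ℤ)^(1+a+b) = (-1:ℤ)^a := by
          rw [← pow_add]
          have h2 : b+1+(1+a+b) = a + 2*(b+1) := by ring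
          rw [h2, pow_add, pow_mul]; simp
        calc (-1:ℤ)^(a+1) * J i + (-1:ℤ)^(b+1) * ((-1:ℤ)^(1+a+b) * J i)
            = (-1:ℤ)^(a+1) * J i + ((-1:ℤ)^(b+1) * (-1:ℤ)^(1+a+b)) * J i := by ring
          _ = 0 := by rw [this, pow_succ]; ring
    have hperm : ∑ i, g (f i) = ∑ i, g i := by
      exact Function.Bijective.sum_comp (Function.Involutive.bijective hinv) g
    have h2 : (2:ℤ) * ∑ i, g i = 0 := by
      have : ∑ i, (g i + g (f i)) = 0 := by simp [key]
      rw [sum_add_distrib, hperm] at this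
      linarith
    have := mul_eq_zero.mp h2
    simpa using this
  · -- cardinality
    set S := (Finset.Icc (-(p : ℤ) + 1) ((n : ℤ) - 1)).erase 0 with hSdef
    have hScard : S.card ≤ n + p := by
      have h1 : S.card ≤ (Finset.Icc (-(p : ℤ) + 1) ((n : ℤ) - 1)).card :=
        card_erase_le
      rw [Int.card_Icc] at h1
      omega
    set R := univ.filter (fun i : Fin (2*k) => (i : ℕ) < ((f i : Fin (2*k)) : ℕ)) with hR
    have hRcard : R.card = k := by
      have hbij : (univ.filter (fun i : Fin (2*k) => (i : ℕ) < ((f i : Fin (2*k)) : ℕ))).card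
          = (univ.filter (fun i : Fin (2*k) => ¬ (i : ℕ) < ((f i : Fin (2*k)) : ℕ))).card := by
        apply Finset.card_nbij' f f
        · intro a ha
          simp only [hR, Finset.mem_coe, mem_filter, mem_univ, true_and] at ha ⊢
          rw [hinv a]; omega
        · intro a ha
          simp only [hR, Finset.mem_coe, mem_filter, mem_univ, true_and] at ha ⊢
          rw [hinv a]
          have := hne a
          omega
        · intro a _; exact hinv a
        · intro a _; exact hinv a
      have hsum : (univ.filter (fun i : Fin (2*k) => (i : ℕ) < ((f i : Fin (2*k)) : ℕ))).card
          + (univ.filter (fun i : Fin (2*k) => ¬ (i : ℕ) < ((f i : Fin (2*k)) : ℕ))).card = 2*k := by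
        simpa using Finset.card_filter_add_card_filter_not
          (s := (univ : Finset (Fin (2*k))))
          (p := fun i : Fin (2*k) => (i : ℕ) < ((f i : Fin (2*k)) : ℕ))
      rw [hR]
      omega
    set T := Fintype.piFinset (fun i : Fin (2*k) =>
      if (i : ℕ) < ((f i : Fin (2*k)) : ℕ) then S else ({0} : Finset ℤ)) with hT
    have hTcard : T.card ≤ (n + p) ^ k := by
      rw [hT, Fintype.card_piFinset]
      calc ∏ i : Fin (2*k), (if (i : ℕ) < ((f i : Fin (2*k)) : ℕ) then S else ({0} : Finset ℤ)).card
          = ∏ i : Fin (2*k), (if (i : ℕ) < ((f i : Fin (2*k)) : ℕ) then S.card else 1) := by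
            apply Finset.prod_congr rfl
            intro i _
            split <;> simp
        _ = S.card ^ R.card := by
            rw [Finset.prod_ite, Finset.prod_const, Finset.prod_const]
            simp [hR]
        _ ≤ (n + p) ^ k := by
            rw [hRcard]
            exact Nat.pow_le_pow_left hScard k
    have hεsq : ∀ i, ε i * ε i = 1 := by
      intro i
      rw [hε i]
      split
      · norm_num
      · rw [← pow_add, ← two_mul, pow_mul]; norm_num
    apply le_trans _ hTcard
    apply Finset.card_le_card_of_injOn
      (fun J (i : Fin (2*k)) => if (i : ℕ) < ((f i : Fin (2*k)) : ℕ) then J i else 0)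
    · intro J hJ
      rw [Finset.mem_coe, mem_filter, Fintype.mem_piFinset] at hJ
      rw [hT, Finset.mem_coe, Fintype.mem_piFinset]
      intro i
      by_cases h : (i : ℕ) < ((f i : Fin (2*k)) : ℕ)
      · simp only [if_pos h]
        exact hJ.1 i
      · simp only [if_neg h]
        exact mem_singleton_self 0
    · intro J hJ J' hJ' heq
      rw [Finset.mem_coe, mem_filter] at hJ hJ'
      funext i
      have key : ∀ q : Fin (2*k), (q : ℕ) < ((f q : Fin (2*k)) : ℕ) → J q = J' q := by
        intro q hq
        have := congrFun heq q
        simp only [if_pos hq] at this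
        exact this
      by_cases h : (i : ℕ) < ((f i : Fin (2*k)) : ℕ)
      · exact key i h
      · have hlt : ((f i : Fin (2*k)) : ℕ) < ((f (f i) : Fin (2*k)) : ℕ) := by
          rw [hinv i]
          have := hne i
          omega
        have hJf : J (f i) = J' (f i) := key (f i) hlt
        have h1 := hJ.2 i
        have h2 := hJ'.2 i
        have : ε i * J i = ε i * J' i := by rw [h1, h2, hJf]
        have hεne : ε i ≠ 0 := by
          intro hz
          have := hεsq i
          rw [hz] at this
          norm_num at this
        exact mul_left_cancel₀ hεne this
end
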